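/- Every path of length 2n + 1 in the quiver Q_D lies in the two-sided ideal I_τ of the path algebra kQ_D; equivalently, the image in Λ_{D,τ} of every path of length 2n + 1 is zero. -/

import Mathlib

open Quiver

/-- The type of arrows of a quiver, bundled with their endpoints. -/
abbrev QuiverArrow (V : Type) [Quiver.{0} V] : Type := Σ a b : V, a ⟶ b

/-- The defining relations of the path algebra of a quiver `V` over `k`, presented
as a quotient of the free algebra on the vertices (idempotents) and the arrows. -/
inductive PathAlgRel (k : Type) [CommRing k] (V : Type) [Quiver.{0} V] [Fintype V] [DecidableEq V] :
    FreeAlgebra k (V ⊕ QuiverArrow V) → FreeAlgebra k (V ⊕ QuiverArrow V) → Prop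
  | vertex (a b : V) :
      PathAlgRel k V (FreeAlgebra.ι k (Sum.inl a) * FreeAlgebra.ι k (Sum.inl b))
        (if a = b then FreeAlgebra.ι k (Sum.inl a) else 0)
  | unit : PathAlgRel k V (∑ a : V, FreeAlgebra.ι k (Sum.inl a)) 1
  | src (f : QuiverArrow V) (v : V) :
      PathAlgRel k V (FreeAlgebra.ι k (Sum.inr f) * FreeAlgebra.ι k (Sum.inl v))
        (if v = f.1 then FreeAlgebra.ι k (Sum.inr f) else 0)
  | tgt (f : QuiverArrow V) (v : V) :
      PathAlgRel k V (FreeAlgebra.ι k (Sum.inl v) * FreeAlgebra.ι k (Sum.inr f))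
        (if v = f.2.1 then FreeAlgebra.ι k (Sum.inr f) else 0)

/-- The path algebra `kQ` of a finite quiver. -/
abbrev PathAlg (k : Type) [CommRing k] (V : Type) [Quiver.{0} V] [Fintype V] [DecidableEq V] :
    Type := RingQuot (PathAlgRel k V)

variable (k : Type) [CommRing k] (V : Type) [Quiver.{0} V] [Fintype V] [DecidableEq V]

/-- The idempotent of the path algebra corresponding to a vertex (trivial path). -/
def vertexElem (a : V) : PathAlg k V :=
  RingQuot.mkAlgHom k (PathAlgRel k V) (FreeAlgebra.ι k (Sum.inl a))

/-- The element of the path algebra corresponding to an arrow. -/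
def arrowElem (f : QuiverArrow V) : PathAlg k V :=
  RingQuot.mkAlgHom k (PathAlgRel k V) (FreeAlgebra.ι k (Sum.inr f))

/-- The element of the path algebra corresponding to a path: the product of its arrows
(in composition order), with trivial paths mapping to the vertex idempotents. -/
def pathElem : ∀ {a b : V}, Quiver.Path a b → PathAlg k V
  | a, _, Quiver.Path.nil => vertexElem k V a
  | _, _, Quiver.Path.cons p f => arrowElem k V ⟨_, _, f⟩ * pathElem p

/-- The two-sided ideal of the path algebra generated by the arrows. -/
def arrowIdeal : TwoSidedIdeal (PathAlg k V) :=
  TwoSidedIdeal.span (Set.range (arrowElem k V))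

open Quiver

/-- The Gauss data of an oriented knot diagram with `n` crossings: traversing the knot,
one passes through `2 * n` crossing-points, indexed by `ZMod (2 * n)`; `c i` is the
crossing visited at position `i`, and `over e`, `under e` are the positions at which the
crossing `e` is visited over- resp. under-crossing. -/
structure GaussData (n : ℕ) where
  c : ZMod (2 * n) → Fin n
  over' : Fin n → ZMod (2 * n)
  under : Fin n → ZMod (2 * n)
  bij : Function.Bijective (Sum.elim over' under : Fin n ⊕ Fin n → ZMod (2 * n))
  c_over : ∀ e, c (over' e) = e
  c_under : ∀ e, c (under e) = e

variable {n : ℕ}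

/-- The vertices of the quiver `Q_D` of the diagram: the crossings `Fin n`
(wrapped in a structure so that the quiver structure can depend on `D`). -/
@[ext] structure DiagVertex (D : GaussData n) where
  val : Fin n
  deriving DecidableEq

instance (D : GaussData n) : Fintype (DiagVertex D) :=
  Fintype.ofEquiv (Fin n) ⟨DiagVertex.mk, DiagVertex.val, fun _ => rfl, fun _ => rfl⟩

/-- The quiver `Q_D` of the diagram: vertices are the crossings, arrows are the segments,
indexed by `ZMod (2 * n)`; the arrow `i` has source `c i` and target `c (i + 1)`. -/
instance diagQuiver (D : GaussData n) : Quiver.{0} (DiagVertex D) :=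
  ⟨fun a b => { i : ZMod (2 * n) // D.c i = a.val ∧ D.c (i + 1) = b.val }⟩

namespace GaussData

variable (D : GaussData n)

/-- The path following the segments `i, i + 1, …, i + ℓ - 1`. -/
def segPath (i : ZMod (2 * n)) : ∀ ℓ : ℕ, Quiver.Path (⟨D.c i⟩ : DiagVertex D) ⟨D.c (i + ℓ)⟩
  | 0 => Quiver.Path.nil.cast rfl (congrArg (fun z => (⟨D.c z⟩ : DiagVertex D)) (by push_cast; ring))
  | ℓ + 1 =>
      (Quiver.Path.cons (segPath i ℓ)
        (⟨i + ℓ, rfl, rfl⟩ : (⟨D.c (i + ℓ)⟩ : DiagVertex D) ⟶ ⟨D.c (i + ℓ + 1)⟩)).cast rfl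
        (congrArg (fun z => (⟨D.c z⟩ : DiagVertex D)) (by push_cast; ring))

/-- The length of the path `α_e` : the unique representative in `{1, …, 2n}` of
`under e - over e` in `ZMod (2 * n)`. -/
def len₁ (e : Fin n) : ℕ :=
  if (D.under e - D.over' e).val = 0 then 2 * n else (D.under e - D.over' e).val

/-- The length of the path `β_e` : the unique representative in `{1, …, 2n}` of
`over e - under e` in `ZMod (2 * n)`. -/
def len₂ (e : Fin n) : ℕ :=
  if (D.over' e - D.under e).val = 0 then 2 * n else (D.over' e - D.under e).val

lemma coe_len₁ [NeZero n] (e : Fin n) :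
    ((D.len₁ e : ℕ) : ZMod (2 * n)) = D.under e - D.over' e := by
  haveI : NeZero (2 * n) := ⟨by have := NeZero.ne n; omega⟩
  rw [len₁]
  split_ifs with h
  · rw [ZMod.natCast_self]
    exact ((ZMod.val_eq_zero _).mp h).symm
  · exact ZMod.natCast_rightInverse _

lemma coe_len₂ [NeZero n] (e : Fin n) :
    ((D.len₂ e : ℕ) : ZMod (2 * n)) = D.over' e - D.under e := by
  haveI : NeZero (2 * n) := ⟨by have := NeZero.ne n; omega⟩
  rw [len₂]
  split_ifs with h
  · rw [ZMod.natCast_self]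
    exact ((ZMod.val_eq_zero _).mp h).symm
  · exact ZMod.natCast_rightInverse _

/-- The path `α_e`, from the over-point of `e` to its under-point. -/
def alphaPath [NeZero n] (e : Fin n) : Quiver.Path (⟨e⟩ : DiagVertex D) ⟨e⟩ :=
  (D.segPath (D.over' e) (D.len₁ e)).cast
    (congrArg DiagVertex.mk (D.c_over e))
    (congrArg (fun z => (⟨D.c z⟩ : DiagVertex D)) (by rw [D.coe_len₁]; ring) |>.trans
      (congrArg DiagVertex.mk (D.c_under e)))

/-- The path `β_e`, from the under-point of `e` to its over-point. -/
def betaPath [NeZero n] (e : Fin n) : Quiver.Path (⟨e⟩ : DiagVertex D) ⟨e⟩ :=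
  (D.segPath (D.under e) (D.len₂ e)).cast
    (congrArg DiagVertex.mk (D.c_under e))
    (congrArg (fun z => (⟨D.c z⟩ : DiagVertex D)) (by rw [D.coe_len₂]; ring) |>.trans
      (congrArg DiagVertex.mk (D.c_over e)))

/-- The positive (over-crossing) fundamental cycle `γ⁺_e = β_e α_e`
(first `α_e`, then `β_e`). -/
def gammaPlus [NeZero n] (e : Fin n) : Quiver.Path (⟨e⟩ : DiagVertex D) ⟨e⟩ :=
  (D.alphaPath e).comp (D.betaPath e)

/-- The negative (under-crossing) fundamental cycle `γ⁻_e = α_e β_e`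
(first `β_e`, then `α_e`). -/
def gammaMinus [NeZero n] (e : Fin n) : Quiver.Path (⟨e⟩ : DiagVertex D) ⟨e⟩ :=
  (D.betaPath e).comp (D.alphaPath e)

end GaussData

variable {n : ℕ}

/-- The element of the path algebra `kQ_D` given by the arrow (segment) `i`. -/
def arrowGen (k : Type) [CommRing k] (D : GaussData n) (i : ZMod (2 * n)) :
    PathAlg k (DiagVertex D) :=
  arrowElem k (DiagVertex D) ⟨⟨D.c i⟩, ⟨D.c (i + 1)⟩, ⟨i, rfl, rfl⟩⟩

/-- The two-sided ideal `I_τ` of `kQ_D`, generated by the Type I relations (composable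
length-2 paths `b ∘ a` with `b ≠ a + 1`) and the Type II relations
`α_e β_e - τ(e) β_e α_e`. -/
def knotIdeal (k : Type) [CommRing k] [NeZero n] (D : GaussData n) (τ : Fin n → kˣ) :
    TwoSidedIdeal (PathAlg k (DiagVertex D)) :=
  TwoSidedIdeal.span
    ({x | ∃ i j : ZMod (2 * n), D.c (i + 1) = D.c j ∧ j ≠ i + 1 ∧
        x = arrowGen k D j * arrowGen k D i} ∪
     {x | ∃ e : Fin n, x = pathElem k (DiagVertex D) (D.gammaMinus e) -
        (τ e : k) • pathElem k (DiagVertex D) (D.gammaPlus e)})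

/-- The defining relations of the algebra `Λ_{D,τ}` of the diagram, as a quotient of the
path algebra `kQ_D`. -/
inductive KnotRel (k : Type) [CommRing k] [NeZero n] (D : GaussData n) (τ : Fin n → kˣ) :
    PathAlg k (DiagVertex D) → PathAlg k (DiagVertex D) → Prop
  | typeI (i j : ZMod (2 * n)) (hcomp : D.c (i + 1) = D.c j) (hne : j ≠ i + 1) :
      KnotRel k D τ (arrowGen k D j * arrowGen k D i) 0
  | typeII (e : Fin n) :
      KnotRel k D τ (pathElem k (DiagVertex D) (D.gammaMinus e))
        ((τ e : k) • pathElem k (DiagVertex D) (D.gammaPlus e))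

/-- The algebra `Λ_{D,τ} = kQ_D / I_τ` of the diagram `D` with respect to `τ`. -/
abbrev KnotAlg (k : Type) [CommRing k] [NeZero n] (D : GaussData n) (τ : Fin n → kˣ) : Type :=
  RingQuot (KnotRel k D τ)

/-- The elements of `Λ_{D,τ}` claimed to form a basis: the trivial paths, the
segment-following paths of length `1 ≤ ℓ ≤ 2n - 1`, and the positive fundamental cycles. -/
def knotBasisFamily (k : Type) [CommRing k] [NeZero n] (D : GaussData n) (τ : Fin n → kˣ) :
    Fin n ⊕ (ZMod (2 * n) × Fin (2 * n - 1)) ⊕ Fin n → KnotAlg k D τ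
  | .inl e => RingQuot.mkAlgHom k (KnotRel k D τ) (vertexElem k (DiagVertex D) ⟨e⟩)
  | .inr (.inl (i, j)) =>
      RingQuot.mkAlgHom k (KnotRel k D τ) (pathElem k (DiagVertex D) (D.segPath i (j.val + 1)))
  | .inr (.inr e) =>
      RingQuot.mkAlgHom k (KnotRel k D τ) (pathElem k (DiagVertex D) (D.gammaPlus e))

/-- The defining relations of the monomial algebra `Ξ_D` of the diagram: the Type I
relations, together with all paths of length `2n + 1` (Type II'). -/
inductive MonRel (k : Type) [CommRing k] [NeZero n] (D : GaussData n) :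
    PathAlg k (DiagVertex D) → PathAlg k (DiagVertex D) → Prop
  | typeI (i j : ZMod (2 * n)) (hcomp : D.c (i + 1) = D.c j) (hne : j ≠ i + 1) :
      MonRel k D (arrowGen k D j * arrowGen k D i) 0
  | typeII' (a b : DiagVertex D) (p : Quiver.Path a b) (hp : p.length = 2 * n + 1) :
      MonRel k D (pathElem k (DiagVertex D) p) 0

/-- The monomial algebra `Ξ_D = kQ_D / J_D` of the diagram `D`. -/
abbrev MonAlg (k : Type) [CommRing k] [NeZero n] (D : GaussData n) : Type :=
  RingQuot (MonRel k D)

/-- The elements of `Ξ_D` claimed to form a basis: the trivial paths and the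
segment-following paths of length `1 ≤ ℓ ≤ 2n`. -/
def monBasisFamily (k : Type) [CommRing k] [NeZero n] (D : GaussData n) :
    Fin n ⊕ (ZMod (2 * n) × Fin (2 * n)) → MonAlg k D
  | .inl e => RingQuot.mkAlgHom k (MonRel k D) (vertexElem k (DiagVertex D) ⟨e⟩)
  | .inr (i, j) =>
      RingQuot.mkAlgHom k (MonRel k D) (pathElem k (DiagVertex D) (D.segPath i (j.val + 1)))


/-!
A path that avoids the Type I relations runs along consecutive segments, so a path of length
`2n + 1` is, modulo Type I, the arrow `i` followed by the full cycle of `2n` segments starting at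
`i`. If `i = over e` that cycle is `γ⁺_e`, which the Type II relation trades for `γ⁻_e` up to the
unit `τ e`; but `γ⁻_e` ends with the arrow `under e - 1`, and `over e ≠ under e` makes the
composite a Type I relation. The case `i = under e` is symmetric.
-/

section PathAlgebra

variable {k V}

@[simp] lemma pathElem_nil (a : V) :
    pathElem k V (Path.nil : Path a a) = vertexElem k V a := by
  simp [pathElem]

@[simp] lemma pathElem_cons {a b c : V} (q : Path a b) (f : b ⟶ c) :
    pathElem k V (q.cons f) = arrowElem k V ⟨b, c, f⟩ * pathElem k V q := by
  simp [pathElem]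

lemma pathElem_cast {a b a' b' : V} (ha : a = a') (hb : b = b') (p : Path a b) :
    pathElem k V (p.cast ha hb) = pathElem k V p := by
  subst ha hb; rfl

lemma vertexElem_mul_pathElem {a b : V} (p : Path a b) :
    vertexElem k V b * pathElem k V p = pathElem k V p := by
  cases p with
  | nil =>
    simpa [vertexElem] using RingQuot.mkAlgHom_rel k (PathAlgRel.vertex (k := k) a a)
  | cons q f =>
    have h : vertexElem k V b * arrowElem k V ⟨_, _, f⟩ = arrowElem k V ⟨_, _, f⟩ := by
      simpa [vertexElem, arrowElem] using
        RingQuot.mkAlgHom_rel k (PathAlgRel.tgt (k := k) ⟨_, _, f⟩ b)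
    rw [pathElem_cons, ← mul_assoc, h]

lemma pathElem_comp {a b c : V} (p : Path a b) (q : Path b c) :
    pathElem k V (p.comp q) = pathElem k V q * pathElem k V p := by
  induction q with
  | nil => rw [Path.comp_nil, pathElem_nil, vertexElem_mul_pathElem]
  | cons q f ih => rw [Path.comp_cons, pathElem_cons, ih, pathElem_cons, mul_assoc]

end PathAlgebra

lemma TwoSidedIdeal.mul_mem_iff_of_sub_smul_mem {k A : Type} [CommRing k] [Ring A] [Algebra k A]
    {I : TwoSidedIdeal A} {x y : A} (u : kˣ) (h : x - (u : k) • y ∈ I) (z : A) :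
    z * x ∈ I ↔ z * y ∈ I := by
  have hsplit : z * x = z * (x - (u : k) • y) + algebraMap k A u * (z * y) := by
    rw [mul_sub, mul_smul_comm, Algebra.smul_def, Algebra.commutes, mul_assoc, sub_add_cancel]
  have hunit : z * y = algebraMap k A ↑u⁻¹ * (algebraMap k A u * (z * y)) := by
    rw [← mul_assoc, ← map_mul, Units.inv_mul, map_one, one_mul]
  constructor
  · intro hx
    rw [hunit]
    refine I.mul_mem_left _ _ ?_
    simpa [hsplit] using I.sub_mem hx (I.mul_mem_left z _ h)
  · intro hy
    rw [hsplit]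
    exact I.add_mem (I.mul_mem_left _ _ h) (I.mul_mem_left _ _ hy)

namespace GaussData

variable (D : GaussData n)

lemma over_ne_under (e : Fin n) : D.over' e ≠ D.under e := fun h =>
  Sum.inl_ne_inr (D.bij.injective (a₁ := .inl e) (a₂ := .inr e) h)

lemma len₁_add_len₂ [NeZero n] (e : Fin n) : D.len₁ e + D.len₂ e = 2 * n := by
  have hne : D.under e - D.over' e ≠ 0 := sub_ne_zero.mpr (D.over_ne_under e).symm
  have hval : (D.under e - D.over' e).val ≠ 0 := by rwa [Ne, ZMod.val_eq_zero]
  have hlt : (D.under e - D.over' e).val < 2 * n := ZMod.val_lt _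
  rw [len₁, len₂, ← neg_sub (D.under e), ZMod.neg_val, if_neg hne, if_neg hval]
  split_ifs <;> omega

lemma arrowElem_eq_arrowGen {u v : DiagVertex D} (i : ZMod (2 * n))
    (hu : D.c i = u.val) (hv : D.c (i + 1) = v.val) :
    arrowElem k (DiagVertex D) ⟨u, v, (⟨i, hu, hv⟩ : u ⟶ v)⟩ = arrowGen k D i := by
  obtain ⟨_⟩ := u
  obtain ⟨_⟩ := v
  dsimp only at hu hv
  subst hu hv
  rfl

def segElem (i : ZMod (2 * n)) : ℕ → PathAlg k (DiagVertex D)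
  | 0 => vertexElem k (DiagVertex D) ⟨D.c i⟩
  | ℓ + 1 => arrowGen k D (i + ℓ) * segElem i ℓ

@[simp] lemma segElem_zero (i : ZMod (2 * n)) :
    D.segElem k i 0 = vertexElem k (DiagVertex D) ⟨D.c i⟩ := rfl

lemma segElem_succ (i : ZMod (2 * n)) (ℓ : ℕ) :
    D.segElem k i (ℓ + 1) = arrowGen k D (i + ℓ) * D.segElem k i ℓ := rfl

lemma pathElem_segPath (i : ZMod (2 * n)) (ℓ : ℕ) :
    pathElem k (DiagVertex D) (D.segPath i ℓ) = D.segElem k i ℓ := by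
  induction ℓ with
  | zero => rw [segPath, pathElem_cast, pathElem_nil, segElem_zero]
  | succ ℓ ih => rw [segPath, pathElem_cast, pathElem_cons, ih, segElem_succ]; rfl

lemma segElem_add (i : ZMod (2 * n)) (ℓ m : ℕ) :
    D.segElem k i (ℓ + m) = D.segElem k (i + ℓ) m * D.segElem k i ℓ := by
  induction m with
  | zero =>
    rw [Nat.add_zero, segElem_zero, ← pathElem_segPath]
    exact (vertexElem_mul_pathElem _).symm
  | succ m ih =>
    rw [← Nat.add_assoc, segElem_succ, segElem_succ, ih, mul_assoc, Nat.cast_add, add_assoc]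

lemma segElem_two_mul [NeZero n] (i : ZMod (2 * n)) :
    D.segElem k i (2 * n) = arrowGen k D (i - 1) * D.segElem k i (2 * n - 1) := by
  have hpos : 1 ≤ 2 * n := by have := NeZero.ne n; omega
  conv_lhs => rw [← Nat.sub_add_cancel hpos, segElem_succ]
  rw [Nat.cast_sub hpos, ZMod.natCast_self, Nat.cast_one, zero_sub, ← sub_eq_add_neg]

lemma pathElem_gammaPlus [NeZero n] (e : Fin n) :
    pathElem k (DiagVertex D) (D.gammaPlus e) = D.segElem k (D.over' e) (2 * n) := by
  have h : D.under e = D.over' e + D.len₁ e := by rw [coe_len₁]; ring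
  rw [gammaPlus, pathElem_comp, alphaPath, betaPath, pathElem_cast, pathElem_cast,
    pathElem_segPath, pathElem_segPath, h, ← segElem_add, len₁_add_len₂]

lemma pathElem_gammaMinus [NeZero n] (e : Fin n) :
    pathElem k (DiagVertex D) (D.gammaMinus e) = D.segElem k (D.under e) (2 * n) := by
  have h : D.over' e = D.under e + D.len₂ e := by rw [coe_len₂]; ring
  rw [gammaMinus, pathElem_comp, alphaPath, betaPath, pathElem_cast, pathElem_cast,
    pathElem_segPath, pathElem_segPath, h, ← segElem_add, add_comm, len₁_add_len₂]

end GaussData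

def typeOneIdeal (D : GaussData n) : TwoSidedIdeal (PathAlg k (DiagVertex D)) :=
  TwoSidedIdeal.span
    {x | ∃ i j : ZMod (2 * n), D.c (i + 1) = D.c j ∧ j ≠ i + 1 ∧
        x = arrowGen k D j * arrowGen k D i}

lemma typeOneIdeal_le_knotIdeal [NeZero n] (D : GaussData n) (τ : Fin n → kˣ) :
    typeOneIdeal k D ≤ knotIdeal k D τ :=
  TwoSidedIdeal.span_mono Set.subset_union_left

section TypeOneIdeal

variable {k} (D : GaussData n)

lemma arrowGen_mul_arrowGen_mem_typeOneIdeal {i j : ZMod (2 * n)} (hc : D.c (i + 1) = D.c j)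
    (hne : j ≠ i + 1) : arrowGen k D j * arrowGen k D i ∈ typeOneIdeal k D :=
  TwoSidedIdeal.subset_span ⟨i, j, hc, hne, rfl⟩

lemma arrowGen_mul_segElem_mem_typeOneIdeal [NeZero n] {i j : ZMod (2 * n)} (hc : D.c i = D.c j)
    (hne : j ≠ i) : arrowGen k D j * D.segElem k i (2 * n) ∈ typeOneIdeal k D := by
  rw [D.segElem_two_mul k, ← mul_assoc]
  refine TwoSidedIdeal.mul_mem_right _ _ _ (arrowGen_mul_arrowGen_mem_typeOneIdeal D ?_ ?_) <;>
    rwa [sub_add_cancel]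

/-- Stated after multiplying by an arrow `j` leaving `b`, so that the nil path also has a
well-defined starting segment `j - p.length`. -/
lemma arrowGen_mul_pathElem_mem_typeOneIdeal_or_eq {a b : DiagVertex D} (p : Path a b)
    (j : ZMod (2 * n)) (hj : D.c j = b.val) :
    arrowGen k D j * pathElem k (DiagVertex D) p ∈ typeOneIdeal k D ∨
      arrowGen k D j * pathElem k (DiagVertex D) p =
        arrowGen k D j * D.segElem k (j - p.length) p.length := by
  induction p generalizing j with
  | nil =>
    right
    obtain rfl : (⟨D.c j⟩ : DiagVertex D) = _ := DiagVertex.ext hj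
    simp
  | @cons mid _ q f ih =>
    obtain ⟨j', hj', hb⟩ := f
    rw [pathElem_cons, D.arrowElem_eq_arrowGen k j' hj' hb, ← mul_assoc]
    by_cases hjj : j = j' + 1
    · subst hjj
      rcases ih j' hj' with hq | hq
      · exact .inl (by rw [mul_assoc]; exact TwoSidedIdeal.mul_mem_left _ _ _ hq)
      · right
        have hstart : j' + 1 - ((q.length + 1 : ℕ) : ZMod (2 * n)) = j' - q.length := by
          push_cast; ring
        rw [mul_assoc, hq, Path.length_cons, hstart, GaussData.segElem_succ, sub_add_cancel]
    · exact .inl (TwoSidedIdeal.mul_mem_right _ _ _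
        (arrowGen_mul_arrowGen_mem_typeOneIdeal D (hb.trans hj.symm) hjj))

end TypeOneIdeal

lemma arrowGen_mul_segElem_mem_knotIdeal [NeZero n] (D : GaussData n) (τ : Fin n → kˣ)
    (i : ZMod (2 * n)) : arrowGen k D i * D.segElem k i (2 * n) ∈ knotIdeal k D τ := by
  have hcycle (e : Fin n) : pathElem k (DiagVertex D) (D.gammaMinus e) -
      (τ e : k) • pathElem k (DiagVertex D) (D.gammaPlus e) ∈ knotIdeal k D τ :=
    TwoSidedIdeal.subset_span (.inr ⟨e, rfl⟩)
  have hle := typeOneIdeal_le_knotIdeal k D τ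
  obtain ⟨e | e, rfl⟩ := D.bij.surjective i
  · rw [Sum.elim_inl, ← D.pathElem_gammaPlus k,
      ← TwoSidedIdeal.mul_mem_iff_of_sub_smul_mem (τ e) (hcycle e), D.pathElem_gammaMinus k]
    exact hle (arrowGen_mul_segElem_mem_typeOneIdeal D (by rw [D.c_under, D.c_over])
      (D.over_ne_under e))
  · rw [Sum.elim_inr, ← D.pathElem_gammaMinus k,
      TwoSidedIdeal.mul_mem_iff_of_sub_smul_mem (τ e) (hcycle e), D.pathElem_gammaPlus k]
    exact hle (arrowGen_mul_segElem_mem_typeOneIdeal D (by rw [D.c_under, D.c_over])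
      (D.over_ne_under e).symm)

theorem stmt3 (k : Type) [Field k] [NeZero n] (D : GaussData n) (τ : Fin n → kˣ)
    (a b : DiagVertex D) (p : Quiver.Path a b) (hp : p.length = 2 * n + 1) :
    pathElem k (DiagVertex D) p ∈ knotIdeal k D τ := by
  cases p with
  | nil => simp at hp
  | cons q f =>
    obtain ⟨j, hj, hb⟩ := f
    have hq : q.length = 2 * n := by simpa using hp
    rw [pathElem_cons, D.arrowElem_eq_arrowGen k j hj hb]
    rcases arrowGen_mul_pathElem_mem_typeOneIdeal_or_eq (k := k) D q j hj with h | h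
    · exact typeOneIdeal_le_knotIdeal k D τ h
    · rw [h, hq, ZMod.natCast_self, sub_zero]
      exact arrowGen_mul_segElem_mem_knotIdeal k D τ j
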